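/- arXiv:1911.01967 — 2 statements merged into one kernel-verified Lean document; each statement's English description precedes it below -/
import Mathlib

section
/- Let ψ be a continuous self-map of a compact orientable surface Σ of genus g. If every Lefschetz number Λ(ψ^k) = Tr((ψ^k)_{*0}) - Tr((ψ^k)_{*1}) + Tr((ψ^k)_{*2}) vanishes for all k ≥ 1, and ψ induces isomorphisms on rational homology, then g = 1. -/
/-!
On the one-dimensional groups `H₀` and `H₂` the induced maps are multiplication by nonzero
scalars `a` and `b`, so the vanishing of the Lefschetz numbers says
`Tr(f₁^k) = a^k + b^k` for all `k ≥ 1`. The polynomial `χ_{f₁} (X - a) (X - b)` annihilates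
`f₁`, `a` and `b`, hence gives a linear recurrence satisfied by `Tr(f₁^k) - a^k - b^k`. Its
constant coefficient is nonzero because `f₁`, `a`, `b` are invertible, so the recurrence forces
the sequence to vanish at `k = 0` as well: `2g = dim H₁ = 2`.
-/

open Polynomial Module

theorem LinearMap.trace_aeval {R M : Type*} [CommRing R] [AddCommGroup M] [Module R M]
    (f : M →ₗ[R] M) (p : R[X]) :
    trace R M (aeval f p) =
      ∑ n ∈ Finset.range (p.natDegree + 1), p.coeff n * trace R M (f ^ n) := by
  simp [aeval_eq_sum_range, map_sum]

theorem Polynomial.sum_range_coeff_mul_eq_coeff_zero_mul {R : Type*} [Semiring R] (p : R[X])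
    {u : ℕ → R} (hu : ∀ n ≠ 0, u n = 0) :
    ∑ n ∈ Finset.range (p.natDegree + 1), p.coeff n * u n = p.coeff 0 * u 0 :=
  Finset.sum_eq_single_of_mem 0 (by simp) fun n _ hn => by rw [hu n hn, mul_zero]

theorem LinearMap.trace_eq_det_of_finrank_eq_one {R M : Type*} [CommRing R] [Nontrivial R]
    [AddCommGroup M] [Module R M] [Module.Free R M] [Module.Finite R M]
    (h : finrank R M = 1) (f : M →ₗ[R] M) :
    trace R M f = LinearMap.det f := by
  obtain ⟨c, rfl, -⟩ := f.existsUnique_eq_smul_id_of_finrank_eq_one h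
  simp [LinearMap.trace_id, h]

theorem LinearEquiv.finrank_eq_card_of_trace_pow_eq_sum_pow {K V ι : Type*} [Field K]
    [AddCommGroup V] [Module K V] [FiniteDimensional K V] [Fintype ι]
    (φ : V ≃ₗ[K] V) (c : ι → K) (hc : ∀ i, c i ≠ 0)
    (h : ∀ k, 1 ≤ k → LinearMap.trace K V ((φ : V →ₗ[K] V) ^ k) = ∑ i, c i ^ k) :
    (finrank K V : K) = Fintype.card ι := by
  set p := (φ : V →ₗ[K] V).charpoly * ∏ i, (X - C (c i))
  have hpφ : aeval (φ : V →ₗ[K] V) p = 0 := by simp [p, LinearMap.aeval_self_charpoly]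
  have hpc : ∀ i, p.eval (c i) = 0 := fun i => by
    rw [eval_mul, eval_prod, Finset.prod_eq_zero (Finset.mem_univ i) (by simp), mul_zero]
  have hp0 : p.coeff 0 ≠ 0 := by
    have hdet := φ.isUnit_det'.ne_zero
    rw [LinearMap.det_eq_sign_charpoly_coeff] at hdet
    simp [p, mul_coeff_zero, coeff_zero_prod, Finset.prod_ne_zero_iff, hc,
      right_ne_zero_of_mul hdet]
  have hrec : ∑ n ∈ Finset.range (p.natDegree + 1),
      p.coeff n * (LinearMap.trace K V ((φ : V →ₗ[K] V) ^ n) - ∑ i, c i ^ n) = 0 := by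
    simp_rw [mul_sub, Finset.sum_sub_distrib, Finset.mul_sum]
    rw [Finset.sum_comm, ← LinearMap.trace_aeval]
    simp_rw [← eval_eq_sum_range, hpφ, hpc]
    simp
  rw [p.sum_range_coeff_mul_eq_coeff_zero_mul
    fun n hn => sub_eq_zero.2 (h n (Nat.one_le_iff_ne_zero.2 hn))] at hrec
  simpa [sub_eq_zero] using (mul_eq_zero.1 hrec).resolve_left hp0


theorem genus_eq_one_of_lefschetz_numbers_vanish_general
    {H0 H1 H2 : Type*} [AddCommGroup H0] [Module ℚ H0] [AddCommGroup H1] [Module ℚ H1]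
    [AddCommGroup H2] [Module ℚ H2]
    [FiniteDimensional ℚ H0] [FiniteDimensional ℚ H1] [FiniteDimensional ℚ H2]
    {g : ℕ}
    (hd0 : Module.finrank ℚ H0 = 1) (hd1 : Module.finrank ℚ H1 = 2 * g)
    (hd2 : Module.finrank ℚ H2 = 1)
    (f0 : H0 ≃ₗ[ℚ] H0) (f1 : H1 ≃ₗ[ℚ] H1) (f2 : H2 ≃ₗ[ℚ] H2)
    (hΛ : ∀ k : ℕ, 1 ≤ k →
      LinearMap.trace ℚ H0 ((f0 : H0 →ₗ[ℚ] H0) ^ k)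
        - LinearMap.trace ℚ H1 ((f1 : H1 →ₗ[ℚ] H1) ^ k)
        + LinearMap.trace ℚ H2 ((f2 : H2 →ₗ[ℚ] H2) ^ k) = 0) :
    g = 1 := by
  set a := LinearMap.det (f0 : H0 →ₗ[ℚ] H0)
  set b := LinearMap.det (f2 : H2 →ₗ[ℚ] H2)
  have htr : ∀ k, 1 ≤ k →
      LinearMap.trace ℚ H1 ((f1 : H1 →ₗ[ℚ] H1) ^ k) = ∑ i, ![a, b] i ^ k := by
    intro k hk
    have hΛk := hΛ k hk
    rw [LinearMap.trace_eq_det_of_finrank_eq_one hd0, LinearMap.trace_eq_det_of_finrank_eq_one hd2,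
      map_pow LinearMap.det, map_pow LinearMap.det] at hΛk
    simp only [Fin.sum_univ_two, Matrix.cons_val_zero, Matrix.cons_val_one, a, b]
    linear_combination -hΛk
  have hab : ∀ i, ![a, b] i ≠ 0 := by
    simp [Fin.forall_fin_two, a, b, f0.isUnit_det'.ne_zero, f2.isUnit_det'.ne_zero]
  have h2g := f1.finrank_eq_card_of_trace_pow_eq_sum_pow ![a, b] hab htr
  rw [hd1, Fintype.card_fin] at h2g
  norm_cast at h2g
  omega

/-- Lefschetz-number criterion for genus one. Let `Σ` be a compact orientable surface of
genus `g`, whose rational homology is given by `ℚ`-vector spaces `H0, H1, H2` with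
`dim H0 = dim H2 = 1` and `dim H1 = 2g`, and let a continuous self-map `ψ` of `Σ` induce
isomorphisms `f0, f1, f2` on rational homology. If every Lefschetz number
`Λ(ψ^k) = Tr(f0^k) - Tr(f1^k) + Tr(f2^k)` vanishes for all `k ≥ 1`, then `g = 1`. -/
theorem genus_eq_one_of_lefschetz_numbers_vanish
    {S : Type*} [TopologicalSpace S] [CompactSpace S] (ψ : S → S) (hψ : Continuous ψ)
    {H0 H1 H2 : Type*} [AddCommGroup H0] [Module ℚ H0] [AddCommGroup H1] [Module ℚ H1]
    [AddCommGroup H2] [Module ℚ H2]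
    [FiniteDimensional ℚ H0] [FiniteDimensional ℚ H1] [FiniteDimensional ℚ H2]
    {g : ℕ}
    (hd0 : Module.finrank ℚ H0 = 1) (hd1 : Module.finrank ℚ H1 = 2 * g)
    (hd2 : Module.finrank ℚ H2 = 1)
    (f0 : H0 ≃ₗ[ℚ] H0) (f1 : H1 ≃ₗ[ℚ] H1) (f2 : H2 ≃ₗ[ℚ] H2)
    (hΛ : ∀ k : ℕ, 1 ≤ k →
      LinearMap.trace ℚ H0 ((f0 : H0 →ₗ[ℚ] H0) ^ k)
        - LinearMap.trace ℚ H1 ((f1 : H1 →ₗ[ℚ] H1) ^ k)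
        + LinearMap.trace ℚ H2 ((f2 : H2 →ₗ[ℚ] H2) ^ k) = 0) :
    g = 1 :=
  genus_eq_one_of_lefschetz_numbers_vanish_general hd0 hd1 hd2 f0 f1 f2 hΛ
end

section
/- Let (M, g, μ) be a Riemannian 3-manifold with volume form, and X a nonvanishing vector field satisfying curl X = λX for a nonzero constant λ. Then the 1-form α = i_X g is a contact form (α ∧ dα is nowhere zero), and X/α(X) is its Reeb vector field. -/
lemma aux_expand (E : Type) [AddCommGroup E] [Module ℝ E]
    (μ : E [⋀^Fin 3]→ₗ[ℝ] ℝ) (c : Fin 3 → ℝ) (m : Fin 3 → E) (a b : E) :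
    μ ![∑ i, c i • m i, a, b] =
      c 0 * μ ![m 0, a, b] + c 1 * μ ![m 1, a, b] + c 2 * μ ![m 2, a, b] := by
  have h : ∀ v : E, μ ![v, a, b] = μ.curryLeft v ![a, b] := fun _ => rfl
  simp only [h, Fin.sum_univ_three, map_add, map_smul, AlternatingMap.add_apply,
    AlternatingMap.smul_apply, smul_eq_mul]

lemma aux_exists (E : Type) [AddCommGroup E] [Module ℝ E]
    (hdim : Module.finrank ℝ E = 3)
    (μ : E [⋀^Fin 3]→ₗ[ℝ] ℝ) (hμ : μ ≠ 0) (X : E) (hX : X ≠ 0) :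
    ∃ v w, μ ![X, v, w] ≠ 0 := by
  have hfd : FiniteDimensional ℝ E := FiniteDimensional.of_finrank_pos (by omega)
  obtain ⟨m, hm⟩ : ∃ m, μ m ≠ 0 := by
    by_contra h; push_neg at h
    exact hμ (AlternatingMap.ext h)
  have hli : LinearIndependent ℝ m := by
    by_contra h; exact hm (μ.map_linearDependent m h)
  have hcard : Fintype.card (Fin 3) = Module.finrank ℝ E := by simp [hdim]
  set B := basisOfLinearIndependentOfCardEqFinrank hli hcard with hB
  have hBm : ∀ i, B i = m i := fun i => by
    rw [hB, coe_basisOfLinearIndependentOfCardEqFinrank]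
  set c : Fin 3 → ℝ := fun i => B.repr X i with hc
  have hXsum : X = ∑ i, c i • m i := by
    conv_lhs => rw [← B.sum_repr X]
    exact Finset.sum_congr rfl fun i _ => by rw [hBm]
  have hm0 : m = ![m 0, m 1, m 2] := by
    funext i; fin_cases i <;> rfl
  obtain ⟨i, hi⟩ : ∃ i, c i ≠ 0 := by
    by_contra h; push_neg at h
    apply hX
    rw [hXsum]
    simp [h]
  fin_cases i
  · refine ⟨m 1, m 2, ?_⟩
    rw [hXsum, aux_expand]
    rw [μ.map_eq_zero_of_eq ![m 1, m 1, m 2] (i := 0) (j := 1) rfl (by decide),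
      μ.map_eq_zero_of_eq ![m 2, m 1, m 2] (i := 0) (j := 2) rfl (by decide), ← hm0]
    simpa using mul_ne_zero hi hm
  · refine ⟨m 0, m 2, ?_⟩
    rw [hXsum, aux_expand]
    rw [μ.map_eq_zero_of_eq ![m 0, m 0, m 2] (i := 0) (j := 1) rfl (by decide),
      μ.map_eq_zero_of_eq ![m 2, m 0, m 2] (i := 0) (j := 2) rfl (by decide)]
    have hswap : μ ![m 1, m 0, m 2] = -μ m := by
      have h2 : m ∘ Equiv.swap 0 1 = ![m 1, m 0, m 2] := by
        funext i; fin_cases i <;> simp [Equiv.swap_apply_def]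
      rw [← h2, μ.map_swap m (show (0 : Fin 3) ≠ 1 by decide)]
    rw [hswap]
    simpa using mul_ne_zero hi (neg_ne_zero.mpr hm)
  · refine ⟨m 0, m 1, ?_⟩
    rw [hXsum, aux_expand]
    rw [μ.map_eq_zero_of_eq ![m 0, m 0, m 1] (i := 0) (j := 1) rfl (by decide),
      μ.map_eq_zero_of_eq ![m 1, m 0, m 1] (i := 0) (j := 2) rfl (by decide)]
    have h1 : μ ![m 0, m 2, m 1] = -μ m := by
      have h2 : m ∘ Equiv.swap 1 2 = ![m 0, m 2, m 1] := by
        funext i; fin_cases i <;> simp [Equiv.swap_apply_def]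
      rw [← h2, μ.map_swap m (show (1 : Fin 3) ≠ 2 by decide)]
    have h3 : μ ![m 2, m 0, m 1] = μ m := by
      have h2 : ![m 0, m 2, m 1] ∘ Equiv.swap 0 1 = ![m 2, m 0, m 1] := by
        funext i; fin_cases i <;> simp [Equiv.swap_apply_def]
      rw [← h2, μ.map_swap _ (show (0 : Fin 3) ≠ 1 by decide), h1, neg_neg]
    rw [h3]
    simpa using mul_ne_zero hi hm

lemma aux_smul (E : Type) [AddCommGroup E] [Module ℝ E]
    (μ : E [⋀^Fin 3]→ₗ[ℝ] ℝ) (t : ℝ) (a v w : E) :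
    μ ![t • a, v, w] = t * μ ![a, v, w] := by
  have h : ∀ p : E, μ ![p, v, w] = μ.curryLeft p ![v, w] := fun _ => rfl
  simp only [h, map_smul, AlternatingMap.smul_apply, smul_eq_mul]

lemma aux_sub (E : Type) [AddCommGroup E] [Module ℝ E]
    (μ : E [⋀^Fin 3]→ₗ[ℝ] ℝ) (a v0 w0 : E) (s t : ℝ) :
    μ ![a, v0 - s • a, w0 - t • a] = μ ![a, v0, w0] := by
  have h1 : ∀ q r : E, μ ![a, q, r] = (μ.curryLeft a).curryLeft q ![r] := fun _ _ => rfl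
  have h2 : ∀ r : E, μ ![a, v0, r] =
      ((μ.curryLeft a).curryLeft v0).curryLeft r ![] := fun _ => rfl
  have hz1 : ∀ r : E, μ ![a, a, r] = 0 := fun r =>
    μ.map_eq_zero_of_eq ![a, a, r] (i := 0) (j := 1) rfl (by decide)
  have hz2 : μ ![a, v0, a] = 0 :=
    μ.map_eq_zero_of_eq ![a, v0, a] (i := 0) (j := 2) rfl (by decide)
  have step1 : ∀ r : E, μ ![a, v0 - s • a, r] = μ ![a, v0, r] := by
    intro r
    rw [h1, map_sub, map_smul, AlternatingMap.sub_apply, AlternatingMap.smul_apply,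
      smul_eq_mul, ← h1, ← h1, hz1, mul_zero, sub_zero]
  rw [step1, h2, map_sub, map_smul, AlternatingMap.sub_apply, AlternatingMap.smul_apply,
    smul_eq_mul, ← h2, ← h2, hz2, mul_zero, sub_zero]

/-- Beltrami fields with constant nonzero proportionality factor are Reeb fields of contact
forms. Working in a chart (so on `E = ℝ³` with an arbitrary Riemannian metric `g` and an
arbitrary volume form `μ`): let `X` be a nonvanishing smooth vector field with
`curl X = λ·X`, `λ ≠ 0`, where curl is defined by `i_{curl X} μ = d(i_X g)`. Then the
1-form `α = i_X g` is a contact form (the 3-form `α ∧ dα` is nowhere zero) and `X / α(X)`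
is its Reeb vector field (`α(R) = 1` and `i_R dα = 0`). -/
theorem beltrami_is_reeb_of_contact_form
    (E : Type) [NormedAddCommGroup E] [InnerProductSpace ℝ E]
    (hdim : Module.finrank ℝ E = 3)
    (g : E → (E →L[ℝ] E →L[ℝ] ℝ)) (hg : ContDiff ℝ (⊤ : ℕ∞) g)
    (hgsymm : ∀ x v w, g x v w = g x w v)
    (hgpos : ∀ x v, v ≠ 0 → 0 < g x v v)
    (μ : E → (E [⋀^Fin 3]→ₗ[ℝ] ℝ)) (hμ : ∀ x, μ x ≠ 0)
    (X : E → E) (hXs : ContDiff ℝ (⊤ : ℕ∞) X) (hX : ∀ x, X x ≠ 0)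
    (lam : ℝ) (hlam : lam ≠ 0)
    -- `dα(u,v) = D_u α(v) - D_v α(u)`, and the Beltrami/curl equation `i_{λX} μ = dα`:
    (hcurl : ∀ x u v, μ x ![lam • X x, u, v] =
      fderiv ℝ (fun y => g y (X y) v) x u - fderiv ℝ (fun y => g y (X y) u) x v) :
    -- contact condition: the 3-form `α ∧ dα` is nowhere zero,
    (∀ x, ∃ u v w : E,
      g x (X x) u * (fderiv ℝ (fun y => g y (X y) w) x v
          - fderiv ℝ (fun y => g y (X y) v) x w)
        - g x (X x) v * (fderiv ℝ (fun y => g y (X y) w) x u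
            - fderiv ℝ (fun y => g y (X y) u) x w)
        + g x (X x) w * (fderiv ℝ (fun y => g y (X y) v) x u
            - fderiv ℝ (fun y => g y (X y) u) x v) ≠ 0) ∧
    -- Reeb field conditions for `R = X / α(X)`:
    (∀ x, g x (X x) ((g x (X x) (X x))⁻¹ • X x) = 1) ∧
    (∀ x v, fderiv ℝ (fun y => g y (X y) v) x ((g x (X x) (X x))⁻¹ • X x)
        - fderiv ℝ (fun y => g y (X y) ((g x (X x) (X x))⁻¹ • X x)) x v = 0) := by
  have hgXX : ∀ x, g x (X x) (X x) ≠ 0 := fun x => ne_of_gt (hgpos x (X x) (hX x))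
  refine ⟨?_, ?_, ?_⟩
  · intro x
    obtain ⟨v0, w0, hvw⟩ := aux_exists E hdim (μ x) (hμ x) (X x) (hX x)
    set a := X x with ha
    set v : E := v0 - (g x a v0 / g x a a) • a with hv
    set w : E := w0 - (g x a w0 / g x a a) • a with hw
    have hαv : g x a v = 0 := by
      rw [hv, map_sub, map_smul, smul_eq_mul, div_mul_cancel₀ _ (hgXX x), sub_self]
    have hαw : g x a w = 0 := by
      rw [hw, map_sub, map_smul, smul_eq_mul, div_mul_cancel₀ _ (hgXX x), sub_self]
    refine ⟨a, v, w, ?_⟩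
    rw [← hcurl x v w, ← hcurl x a w, ← hcurl x a v, hαv, hαw, zero_mul, zero_mul,
      sub_zero, add_zero, ← ha, hv, hw, aux_smul, aux_sub]
    exact mul_ne_zero (hgXX x) (mul_ne_zero hlam hvw)
  · intro x
    rw [map_smul, smul_eq_mul, inv_mul_cancel₀ (hgXX x)]
  · intro x v
    set a := X x with ha
    set c : ℝ := (g x a a)⁻¹ with hc
    have hdiff : DifferentiableAt ℝ (fun y => g y (X y) a) x :=
      (((hg.differentiable (by simp)) x).clm_apply ((hXs.differentiable (by simp)) x)).clm_apply
        (differentiableAt_const a)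
    have hfun : (fun y => g y (X y) (c • a)) = fun y => c * g y (X y) a := by
      funext y; rw [map_smul, smul_eq_mul]
    have hzero : μ x ![lam • X x, a, v] = 0 := by
      rw [aux_smul, (μ x).map_eq_zero_of_eq ![a, a, v] (i := 0) (j := 1) rfl (by decide),
        mul_zero]
    have key := hcurl x a v
    rw [hfun, fderiv_const_mul hdiff c, ContinuousLinearMap.map_smul,
      ContinuousLinearMap.smul_apply, ← smul_sub, ← key, hzero, smul_zero]
end
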